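/- arXiv:2002.10249 — 6 statements merged into one kernel-verified Lean document; each statement's English description precedes it below -/
import Mathlib

section
/- Let K be a field of characteristic 0 and let P ∈ K[X₁,…,Xₙ]ⁿ be a polynomial map each of whose components has total degree at most 2. Then P is injective if and only if det J_P(X) ≠ 0 for every X ∈ Kⁿ. -/
/-!
For a polynomial `p` of total degree at most `2` the midpoint rule is exact:
`p b - p a = ∇p((a + b) / 2) · (b - a)`, because both sides are linear in `p` and the identity
is checked directly on `1`, `X i` and `X i * X j`. Applied to the components of `P`, this says
`P b - P a = J_P((a + b) / 2) (b - a)`. Hence a singular Jacobian `J_P(x) v = 0` with `v ≠ 0`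
produces the collision `P (x + v / 2) = P (x - v / 2)`, and conversely a collision
`P a = P b` with `a ≠ b` produces the singular Jacobian at `(a + b) / 2`.
-/

open MvPolynomial Matrix

lemma Finsupp.eq_zero_or_single_or_add_single_of_sum_le_two {σ : Type*} (d : σ →₀ ℕ)
    (hd : (d.sum fun _ e => e) ≤ 2) :
    d = 0 ∨ (∃ i, d = single i 1) ∨ ∃ i j, d = single i 1 + single j 1 := by
  classical
  have hcard : Multiset.card (toMultiset d) ≤ 2 := (card_toMultiset d).trans_le hd
  rw [← toMultiset_toFinsupp d]
  generalize toMultiset d = s at hcard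
  interval_cases h : Multiset.card s
  · simp [Multiset.card_eq_zero.1 h]
  · obtain ⟨i, rfl⟩ := Multiset.card_eq_one.1 h
    exact Or.inr (Or.inl ⟨i, Multiset.toFinsupp_singleton i⟩)
  · obtain ⟨i, j, rfl⟩ := Multiset.card_eq_two.1 h
    refine Or.inr (Or.inr ⟨i, j, ?_⟩)
    rw [Multiset.insert_eq_cons, ← Multiset.singleton_add, Multiset.toFinsupp_add,
      Multiset.toFinsupp_singleton, Multiset.toFinsupp_singleton]

namespace MvPolynomial

variable {σ R : Type*} [Fintype σ] [CommRing R] [Invertible (2 : R)]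

noncomputable def midpointRuleError (a b : σ → R) : MvPolynomial σ R →ₗ[R] R :=
  (aeval b).toLinearMap - (aeval a).toLinearMap -
    ∑ k, (b k - a k) • (aeval (midpoint R a b)).toLinearMap ∘ₗ (pderiv k).toLinearMap

lemma midpointRuleError_apply (a b : σ → R) (p : MvPolynomial σ R) :
    midpointRuleError a b p =
      eval b p - eval a p - ∑ k, (b k - a k) * eval (midpoint R a b) (pderiv k p) := by
  simp [midpointRuleError, LinearMap.sum_apply]

lemma midpointRuleError_one (a b : σ → R) : midpointRuleError a b 1 = 0 := by
  simp [midpointRuleError_apply]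

lemma midpointRuleError_X (a b : σ → R) (i : σ) : midpointRuleError a b (X i) = 0 := by
  classical
  simp [midpointRuleError_apply, pderiv_X, Pi.single_apply]

lemma midpointRuleError_X_mul_X (a b : σ → R) (i j : σ) :
    midpointRuleError a b (X i * X j) = 0 := by
  classical
  set m := midpoint R a b
  have hgrad : ∑ k, (b k - a k) * eval m (pderiv k (X i * X j)) =
      (b j - a j) * m i + (b i - a i) * m j := by
    simp [Derivation.leibniz, pderiv_X, Pi.single_apply, mul_add, Finset.sum_add_distrib,
      apply_ite (eval m), mul_ite]
  rw [midpointRuleError_apply, hgrad]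
  simp only [map_mul, eval_X, m, midpoint_eq_smul_add, Pi.smul_apply, Pi.add_apply, smul_eq_mul]
  linear_combination (a i * a j - b i * b j) * invOf_mul_self (2 : R)

lemma midpointRuleError_monomial (a b : σ → R) (d : σ →₀ ℕ)
    (hd : (d.sum fun _ e => e) ≤ 2) :
    midpointRuleError a b (monomial d 1) = 0 := by
  rcases d.eq_zero_or_single_or_add_single_of_sum_le_two hd with
    rfl | ⟨i, rfl⟩ | ⟨i, j, rfl⟩
  · simpa using midpointRuleError_one a b
  · exact midpointRuleError_X a b i
  · rw [← one_mul (1 : R), ← monomial_mul]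
    exact midpointRuleError_X_mul_X a b i j

lemma midpointRuleError_eq_zero_of_totalDegree_le_two {p : MvPolynomial σ R}
    (hp : p.totalDegree ≤ 2) (a b : σ → R) :
    midpointRuleError a b p = 0 := by
  rw [p.as_sum, map_sum]
  refine Finset.sum_eq_zero fun d hd => ?_
  rw [← mul_one (coeff d p), ← smul_eq_mul, ← smul_monomial, map_smul,
    midpointRuleError_monomial a b d ((le_totalDegree hd).trans hp), smul_zero]

lemma mulVec_jacobian_midpoint {ι : Type*} (P : ι → MvPolynomial σ R)
    (hP : ∀ j, (P j).totalDegree ≤ 2) (a b : σ → R) :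
    (Matrix.of fun j k => eval (midpoint R a b) (pderiv k (P j))) *ᵥ (b - a) =
      fun j => eval b (P j) - eval a (P j) := by
  funext j
  have h := midpointRuleError_eq_zero_of_totalDegree_le_two (hP j) a b
  rw [midpointRuleError_apply, sub_eq_zero] at h
  simp [h, Matrix.mulVec, dotProduct, mul_comm]

end MvPolynomial

/-- A polynomial map `P` over a field `K` of characteristic `0` whose components have total
degree at most `2` is injective iff its Jacobian determinant is nonzero at every point. -/
theorem quadratic_map_injective_iff_jacobian_ne_zero (n : ℕ) (K : Type*) [Field K] [CharZero K]
    (P : Fin n → MvPolynomial (Fin n) K)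
    (hdeg : ∀ i, (P i).totalDegree ≤ 2) :
    Function.Injective (fun x : Fin n → K => fun i => MvPolynomial.eval x (P i)) ↔
      ∀ X : Fin n → K,
        (Matrix.of fun j k => MvPolynomial.eval X (MvPolynomial.pderiv k (P j))).det ≠ 0 := by
  constructor
  · intro hinj X hdet
    obtain ⟨v, hv, hJv⟩ := Matrix.exists_mulVec_eq_zero_iff.2 hdet
    set w := (⅟2 : K) • v
    have hstep : (X + w) - (X - w) = v := by
      rw [add_sub_sub_cancel, ← add_smul, invOf_two_add_invOf_two, one_smul]
    have hJ := mulVec_jacobian_midpoint P hdeg (X - w) (X + w)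
    rw [midpoint_sub_add, hstep, hJv] at hJ
    have hcollide : X + w = X - w := hinj (funext fun j => sub_eq_zero.1 (congrFun hJ j).symm)
    exact hv (by rw [← hstep, hcollide, sub_self])
  · intro hdet a b hab
    have hJ : (Matrix.of fun j k => eval (midpoint K a b) (pderiv k (P j))) *ᵥ (b - a) = 0 := by
      rw [mulVec_jacobian_midpoint P hdeg]
      exact funext fun j => sub_eq_zero.2 (congrFun hab j).symm
    exact (sub_eq_zero.1 (Matrix.eq_zero_of_mulVec_eq_zero (hdet _) hJ)).symm
end

section
/- Let A be an n×n real (or complex) matrix and let D(X) = X + (AX)^{*3}. Then the Jacobian determinant det J_D(X) equals 1 for all X if and only if the matrix (AX)^{Δ2}·A is nilpotent for every X. -/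
open Polynomial Matrix

/-- Evaluating the reversed characteristic polynomial at `s` gives `det (1 - s • M)`. -/
lemma eval_charpolyRev_eq_det {K : Type*} [Field K] {m : Type*} [Fintype m] [DecidableEq m]
    (M : Matrix m m K) (s : K) :
    (M.charpolyRev).eval s = (1 - s • M).det := by
  rw [Matrix.charpolyRev, ← coe_evalRingHom, RingHom.map_det]
  congr 1
  ext i j
  simp only [RingHom.mapMatrix_apply, Matrix.map_apply, Matrix.sub_apply, Matrix.smul_apply,
    Matrix.one_apply, smul_eq_mul, Polynomial.eval_sub, Polynomial.eval_mul, Polynomial.eval_X,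
    Polynomial.eval_C, apply_ite (Polynomial.eval s), Polynomial.eval_one, Polynomial.eval_zero,
    mul_comm]
  by_cases hij : i = j <;> simp [hij, coe_evalRingHom] <;> exact mul_comm _ _

/-- Over a field, a matrix is nilpotent iff its reversed characteristic polynomial is `1`. -/
lemma charpolyRev_eq_one_iff_isNilpotent {K : Type*} [Field K] {m : Type*} [Fintype m]
    [DecidableEq m] (M : Matrix m m K) :
    M.charpolyRev = 1 ↔ IsNilpotent M := by
  constructor
  · intro h
    rw [← Matrix.reverse_charpoly] at h
    set d := M.charpoly.natDegree with hd
    have invol : ∀ q : K[X], reflect d (reflect d q) = q := by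
      intro q
      ext k
      simp [Polynomial.coeff_reflect, Polynomial.revAt_invol]
    have h1 : reflect d M.charpoly = 1 := h
    have hcp : M.charpoly = Polynomial.X ^ d := by
      calc M.charpoly = reflect d (reflect d M.charpoly) := (invol _).symm
        _ = reflect d 1 := by rw [h1]
        _ = Polynomial.X ^ d := by
            have := Polynomial.reflect_monomial (R := K) d (0 : ℕ)
            simpa [Polynomial.revAt_le (Nat.zero_le d)] using this

    have hd2 : d = Fintype.card m := by
      rw [hd, Matrix.charpoly_natDegree_eq_dim]
    refine ⟨Fintype.card m, ?_⟩
    have := M.aeval_self_charpoly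
    rw [hcp, hd2] at this
    simp only [map_pow, aeval_X] at this
    exact this
  · intro h
    have hu := Matrix.isUnit_charpolyRev_of_isNilpotent h
    obtain ⟨r, hr, hrp⟩ := Polynomial.isUnit_iff.mp hu
    have h0 : (M.charpolyRev).eval 0 = 1 := Matrix.eval_charpolyRev
    rw [← hrp] at h0 ⊢
    simp only [Polynomial.eval_C] at h0
    rw [h0, Polynomial.C_1]

/-- For a real or complex `n×n` matrix `A` and the cubic-linear map `D(X) = X + (AX)^{*3}`,
whose Jacobian matrix is `J_D(X) = I + 3(AX)^{Δ2}A`, the Jacobian determinant is identically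
`1` iff the matrix `(AX)^{Δ2}A` is nilpotent for every `X`. -/
theorem jacobian_det_one_iff_nilpotent (K : Type*) [RCLike K]
    (n : ℕ) (A : Matrix (Fin n) (Fin n) K) :
    (∀ X : Fin n → K,
      ((1 : Matrix (Fin n) (Fin n) K) +
        (3 : K) • (Matrix.diagonal fun i => (A.mulVec X i) ^ 2) * A).det = 1) ↔
    (∀ X : Fin n → K,
      IsNilpotent ((Matrix.diagonal fun i => (A.mulVec X i) ^ 2) * A)) := by
  constructor
  · intro h X
    set M : Matrix (Fin n) (Fin n) K :=
      (Matrix.diagonal fun i => (A.mulVec X i) ^ 2) * A with hM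
    -- scaling: for each t, the hypothesis at t • X gives det (1 + 3 t² • M) = 1
    have key : ∀ t : K, (M.charpolyRev).eval (-3 * t ^ 2) = 1 := by
      intro t
      have h1 := h (t • X)
      have h2 : (Matrix.diagonal fun i => (A.mulVec (t • X) i) ^ 2)
          = (t ^ 2) • Matrix.diagonal fun i => (A.mulVec X i) ^ 2 := by
        rw [A.mulVec_smul t X]
        ext i j
        rcases eq_or_ne i j with rfl | hij
        · simp [mul_pow]
        · simp [Matrix.diagonal_apply_ne _ hij]
      rw [h2] at h1
      rw [eval_charpolyRev_eq_det]
      have heq : (1 : Matrix (Fin n) (Fin n) K) - (-3 * t ^ 2) • M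
          = 1 + (3 : K) • ((t ^ 2) • Matrix.diagonal fun i => (A.mulVec X i) ^ 2) * A := by
        rw [sub_eq_add_neg, ← neg_smul, Matrix.smul_mul, Matrix.smul_mul, smul_smul, hM]
        have hc : (-(-3 * t ^ 2) : K) = 3 * t ^ 2 := by ring
        rw [hc]
      rw [heq]
      exact h1
    -- hence the polynomial (charpolyRev M - 1) ∘ (-3 X²) vanishes identically
    have hq : (M.charpolyRev - 1).comp
        (Polynomial.C (-3 : K) * Polynomial.X ^ 2) = 0 := by
      apply Polynomial.eq_zero_of_infinite_isRoot
      apply Set.infinite_of_injective_forall_mem (f := fun t : K => t)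
        (fun a b hab => hab)
      intro t
      simp only [Set.mem_setOf_eq, Polynomial.IsRoot.def, Polynomial.eval_comp,
        Polynomial.eval_sub, Polynomial.eval_mul, Polynomial.eval_C, Polynomial.eval_pow,
        Polynomial.eval_X, Polynomial.eval_one]
      rw [key t]
      ring
    rw [Polynomial.comp_eq_zero_iff] at hq
    rcases hq with hq | ⟨-, hq⟩
    · rw [← charpolyRev_eq_one_iff_isNilpotent, ← sub_eq_zero]
      exact hq
    · exfalso
      have h3 := congrArg Polynomial.natDegree hq
      rw [Polynomial.natDegree_C_mul (show (-3 : K) ≠ 0 by norm_num)] at h3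
      simp at h3
  · intro h X
    have hnil := h X
    set M : Matrix (Fin n) (Fin n) K :=
      (Matrix.diagonal fun i => (A.mulVec X i) ^ 2) * A with hM
    have h1 : M.charpolyRev = 1 := (charpolyRev_eq_one_iff_isNilpotent M).mpr hnil
    have h2 := eval_charpolyRev_eq_det M (-1 * 3)
    rw [h1] at h2
    simp only [Polynomial.eval_one] at h2
    rw [h2, hM, sub_eq_add_neg, ← neg_smul, Matrix.smul_mul]
    norm_num
end

section
/- Let A be an n×n real matrix and suppose the map Ĉ(X) = X + (AX)^{*3} from ℝⁿ to ℝⁿ is not proper. Then there exists an unbounded sequence (U_i) with each U_i ∈ Im(AAᵀ) such that the sequence (U_i + A(U_i^{*3})) is bounded; in other words, the map X ↦ X + A(X^{*3}) is not proper on Im(AAᵀ). -/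
/-!
A compact set `C` with non-compact preimage under `Ĉ` has a closed, hence unbounded, preimage;
pick an unbounded sequence `Xᵢ` in it and put `Uᵢ = A Xᵢ ∈ Im A = Im (A Aᵀ)`. Then
`Uᵢ + A (Uᵢ^{*3}) = A Ĉ(Xᵢ)` stays in the compact set `A C`, while `Xᵢ = Ĉ(Xᵢ) - Uᵢ^{*3}`
would be bounded if `Uᵢ` were.
-/

open Bornology Matrix Set
open scoped Pointwise

theorem Matrix.range_mulVec_self_mul_transpose {m n R : Type*} [Fintype m] [Fintype n] [Field R]
    [LinearOrder R] [IsStrictOrderedRing R] (A : Matrix m n R) :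
    range (A * Aᵀ).mulVec = range A.mulVec := by
  have h : LinearMap.range (A * Aᵀ).mulVecLin = LinearMap.range A.mulVecLin := by
    refine Submodule.eq_of_le_of_finrank_le ?_ (rank_self_mul_transpose A).ge
    rintro _ ⟨z, rfl⟩
    exact ⟨Aᵀ *ᵥ z, mulVec_mulVec _ _ _⟩
  simpa only [LinearMap.coe_range, coe_mulVecLin] using congrArg SetLike.coe h

theorem Bornology.IsBounded.image_of_continuous {X Y : Type*} [PseudoMetricSpace X] [ProperSpace X]
    [PseudoMetricSpace Y] {f : X → Y} (hf : Continuous f) {s : Set X} (hs : IsBounded s) :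
    IsBounded (f '' s) :=
  (hs.isCompact_closure.image hf).isBounded.subset (image_mono subset_closure)

theorem exists_seq_mem_not_isBounded_range {E : Type*} [SeminormedAddCommGroup E] {s : Set E}
    (hs : ¬IsBounded s) : ∃ x : ℕ → E, (∀ i, x i ∈ s) ∧ ¬IsBounded (range x) := by
  simp only [isBounded_iff_forall_norm_le, not_exists, not_forall, not_le] at hs
  choose x hxs hx using fun i : ℕ => hs i
  refine ⟨x, hxs, fun hb => ?_⟩
  obtain ⟨C, hC⟩ := isBounded_iff_forall_norm_le.1 hb
  obtain ⟨i, hi⟩ := exists_nat_gt C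
  exact (hi.trans (hx i)).not_ge (hC _ (mem_range_self i))

/-- If the cubic-linear map `Ĉ(X) = X + (AX)^{*3}` on `ℝⁿ` is not proper, then there is an
unbounded sequence `(U_i)` in `Im(AAᵀ)` such that `(U_i + A(U_i^{*3}))` is bounded, i.e.
`X ↦ X + A(X^{*3})` is not proper on `Im(AAᵀ)`. -/
theorem not_proper_gives_unbounded_seq_on_range (n : ℕ) (A : Matrix (Fin n) (Fin n) ℝ)
    (hnp : ¬ ∀ C : Set (Fin n → ℝ), IsCompact C →
      IsCompact ((fun X : Fin n → ℝ => fun i => X i + (A.mulVec X i) ^ 3) ⁻¹' C)) :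
    ∃ U : ℕ → Fin n → ℝ,
      (∀ i, U i ∈ Set.range (A * A.transpose).mulVec) ∧
      ¬ Bornology.IsBounded (Set.range U) ∧
      Bornology.IsBounded
        (Set.range fun i => U i + A.mulVec fun k => (U i k) ^ 3) := by
  set F : (Fin n → ℝ) → Fin n → ℝ := fun X => X + (A *ᵥ X) ^ 3
  have hF : Continuous F := by fun_prop
  push Not at hnp
  obtain ⟨C, hC, hFC⟩ := hnp
  have hunb : ¬IsBounded (F ⁻¹' C) := fun hb =>
    hFC (Metric.isCompact_of_isClosed_isBounded (hC.isClosed.preimage hF) hb)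
  obtain ⟨X, hXC, hX⟩ := exists_seq_mem_not_isBounded_range hunb
  refine ⟨fun i => A *ᵥ X i, fun i => range_mulVec_self_mul_transpose A ▸ mem_range_self _, ?_, ?_⟩
  · intro hU
    refine hX ((hC.isBounded.sub (hU.image_of_continuous (continuous_pow 3))).subset ?_)
    rintro _ ⟨i, rfl⟩
    exact ⟨F (X i), hXC i, _, mem_image_of_mem _ (mem_range_self i), add_sub_cancel_right _ _⟩
  · refine (hC.image (by fun_prop : Continuous (A *ᵥ ·))).isBounded.subset ?_
    rintro _ ⟨i, rfl⟩
    exact ⟨F (X i), hXC i, mulVec_add A _ _⟩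
end

section
/- Let A be an n×n real matrix and suppose the map Ĉ(X) = X + (AX)^{*3} from ℝⁿ to ℝⁿ is not proper. Then there exists W ∈ Im(Aᵀ) such that A((AW)^{*3}) = 0 but AW ≠ 0. -/
/-!
Let `U = AX` and `q(U) = A(U^{*3})`. If the conclusion fails then, since `Im(AAᵀ) = Im(A)`, the
cubic form `q` vanishes on `Im(A)` only at `0`, so by compactness of the unit sphere of `Im(A)` and
homogeneity, `ε ‖U‖³ ≤ ‖q(U)‖` there for some `ε > 0`. Applying `A` to `Y = X + (AX)^{*3}` gives
`AY = U + q(U)`, hence `ε ‖U‖³ ≤ ‖AY‖ + ‖U‖`: a bound on `Y` bounds `U`, and then also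
`X = Y - U^{*3}`. So preimages of compact sets are closed and bounded, i.e. compact.
-/

open Matrix Bornology

theorem Matrix.range_mulVec_mul_transpose {m n R : Type*} [Fintype m] [Fintype n] [Field R]
    [LinearOrder R] [IsStrictOrderedRing R] (A : Matrix m n R) :
    Set.range (A * Aᵀ).mulVec = Set.range A.mulVec := by
  suffices LinearMap.range (A * Aᵀ).mulVecLin = LinearMap.range A.mulVecLin from
    congrArg SetLike.coe this
  apply Submodule.eq_of_le_of_finrank_eq
  · rw [Matrix.mulVecLin_mul]
    exact LinearMap.range_comp_le_range _ _
  · exact A.rank_self_mul_transpose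

theorem exists_pos_mul_norm_pow_le_norm_of_homogeneous {E F : Type*} [NormedAddCommGroup E]
    [NormedSpace ℝ E] [FiniteDimensional ℝ E] [NormedAddCommGroup F] [NormedSpace ℝ F]
    {f : E → F} {k : ℕ} (hk : k ≠ 0) (hf : Continuous f)
    (hhom : ∀ t : ℝ, 0 < t → ∀ x, f (t • x) = t ^ k • f x) (S : Submodule ℝ E)
    (hS : ∀ x ∈ S, f x = 0 → x = 0) :
    ∃ ε > 0, ∀ x ∈ S, ε * ‖x‖ ^ k ≤ ‖f x‖ := by
  set K := Metric.sphere (0 : E) 1 ∩ S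
  have hK : IsCompact K := (isCompact_sphere 0 1).inter_right S.closed_of_finiteDimensional
  have hnormalize : ∀ x ∈ S, x ≠ 0 → ‖x‖⁻¹ • x ∈ K := fun x hx hx0 =>
    ⟨by simp [norm_smul, hx0], S.smul_mem _ hx⟩
  rcases K.eq_empty_or_nonempty with hKe | hKne
  · refine ⟨1, one_pos, fun x hx => ?_⟩
    obtain rfl : x = 0 := by
      by_contra hx0
      simpa [hKe] using hnormalize x hx hx0
    simp [zero_pow hk]
  obtain ⟨u, ⟨hu, huS⟩, hmin⟩ := hK.exists_isMinOn hKne (continuous_norm.comp hf).continuousOn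
  have hu0 : u ≠ 0 := ne_zero_of_mem_unit_sphere ⟨u, hu⟩
  refine ⟨‖f u‖, norm_pos_iff.mpr fun h => hu0 (hS u huS h), fun x hx => ?_⟩
  rcases eq_or_ne x 0 with rfl | hx0
  · simp [zero_pow hk]
  have hxpos : 0 < ‖x‖ := norm_pos_iff.mpr hx0
  calc ‖f u‖ * ‖x‖ ^ k ≤ ‖f (‖x‖⁻¹ • x)‖ * ‖x‖ ^ k := by
        gcongr
        exact hmin (hnormalize x hx hx0)
    _ = ‖f x‖ := by
        rw [hhom _ (inv_pos.mpr hxpos), norm_smul, norm_pow, norm_inv, norm_norm, mul_comm,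
          ← mul_assoc, ← mul_pow, mul_inv_cancel₀ hxpos.ne', one_pow, one_mul]

theorem le_max_of_mul_pow_le_add {ε a t : ℝ} {k : ℕ} (hk : 2 ≤ k) (hε : 0 < ε) (ha : 0 ≤ a)
    (h : ε * t ^ k ≤ a + t) : t ≤ max 1 ((a + 1) / ε) := by
  rcases le_or_gt t 1 with ht | ht
  · exact le_max_of_le_left ht
  refine le_max_of_le_right ((le_div_iff₀ hε).mpr ?_)
  have hsq : t * t ≤ t ^ k := by
    simpa [sq] using pow_le_pow_right₀ ht.le hk
  have : ε * t * t ≤ (a + 1) * t := by nlinarith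
  nlinarith

section Cube

variable {ι : Type*}

def cube (v : ι → ℝ) : ι → ℝ := fun k => v k ^ 3

theorem continuous_cube : Continuous (cube : (ι → ℝ) → ι → ℝ) :=
  continuous_pi fun k => (continuous_apply k).pow 3

theorem cube_smul (t : ℝ) (v : ι → ℝ) : cube (t • v) = t ^ 3 • cube v := by
  ext k
  simp [cube, mul_pow]

variable [Fintype ι]

theorem norm_cube_le (v : ι → ℝ) : ‖cube v‖ ≤ ‖v‖ ^ 3 :=
  (pi_norm_le_iff_of_nonneg (by positivity)).mpr fun k => by
    rw [cube, norm_pow]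
    exact pow_le_pow_left₀ (norm_nonneg _) (norm_le_pi_norm v k) 3

variable (A : Matrix ι ι ℝ)

theorem exists_pos_mul_norm_pow_le_norm_mulVec_cube
    (hA : ∀ U ∈ Set.range A.mulVec, A *ᵥ cube U = 0 → U = 0) :
    ∃ ε > 0, ∀ X, ε * ‖A *ᵥ X‖ ^ 3 ≤ ‖A *ᵥ cube (A *ᵥ X)‖ := by
  obtain ⟨ε, hε, hbound⟩ := exists_pos_mul_norm_pow_le_norm_of_homogeneous (f := (A *ᵥ cube ·))
    three_ne_zero (A.mulVecLin.continuous_of_finiteDimensional.comp continuous_cube)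
    (fun t _ v => by rw [cube_smul, mulVec_smul]) (LinearMap.range A.mulVecLin) hA
  exact ⟨ε, hε, fun X => hbound _ ⟨X, rfl⟩⟩

theorem isBounded_preimage_add_cube
    (hA : ∀ U ∈ Set.range A.mulVec, A *ᵥ cube U = 0 → U = 0) {S : Set (ι → ℝ)}
    (hS : IsBounded S) : IsBounded ((fun X => X + cube (A *ᵥ X)) ⁻¹' S) := by
  obtain ⟨ε, hε, hcoercive⟩ := exists_pos_mul_norm_pow_le_norm_mulVec_cube A hA
  obtain ⟨B, hB0, hB⟩ := hS.exists_pos_norm_le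
  set L := A.mulVecLin.toContinuousLinearMap
  set T := max 1 ((‖L‖ * B + 1) / ε)
  refine isBounded_iff_forall_norm_le.mpr ⟨B + T ^ 3, fun X hX => ?_⟩
  set Y := X + cube (A *ᵥ X)
  have hY : ‖Y‖ ≤ B := hB Y hX
  have hAY : ‖A *ᵥ Y‖ ≤ ‖L‖ * B :=
    (L.le_opNorm Y).trans (mul_le_mul_of_nonneg_left hY (norm_nonneg _))
  have hAX : ‖A *ᵥ X‖ ≤ T := by
    refine le_max_of_mul_pow_le_add (by norm_num) hε (by positivity) ((hcoercive X).trans ?_)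
    calc ‖A *ᵥ cube (A *ᵥ X)‖ = ‖A *ᵥ Y - A *ᵥ X‖ := by rw [mulVec_add, add_sub_cancel_left]
      _ ≤ ‖A *ᵥ Y‖ + ‖A *ᵥ X‖ := norm_sub_le _ _
      _ ≤ ‖L‖ * B + ‖A *ᵥ X‖ := by gcongr
  calc ‖X‖ = ‖Y - cube (A *ᵥ X)‖ := by rw [add_sub_cancel_right]
    _ ≤ ‖Y‖ + ‖cube (A *ᵥ X)‖ := norm_sub_le _ _
    _ ≤ B + T ^ 3 := by
        gcongr
        exact (norm_cube_le _).trans (pow_le_pow_left₀ (norm_nonneg _) hAX 3)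

theorem isCompact_preimage_add_cube
    (hA : ∀ U ∈ Set.range A.mulVec, A *ᵥ cube U = 0 → U = 0) {C : Set (ι → ℝ)}
    (hC : IsCompact C) : IsCompact ((fun X => X + cube (A *ᵥ X)) ⁻¹' C) :=
  Metric.isCompact_of_isClosed_isBounded
    (hC.isClosed.preimage (continuous_id.add
      (continuous_cube.comp A.mulVecLin.continuous_of_finiteDimensional)))
    (isBounded_preimage_add_cube A hA hC.isBounded)

end Cube

/-- If the cubic-linear map `Ĉ(X) = X + (AX)^{*3}` on `ℝⁿ` is not proper, then there exists
`W ∈ Im(Aᵀ)` such that `A((AW)^{*3}) = 0` but `AW ≠ 0`. -/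
theorem not_proper_gives_nontrivial_kernel_point (n : ℕ) (A : Matrix (Fin n) (Fin n) ℝ)
    (hnp : ¬ ∀ C : Set (Fin n → ℝ), IsCompact C →
      IsCompact ((fun X : Fin n → ℝ => fun i => X i + (A.mulVec X i) ^ 3) ⁻¹' C)) :
    ∃ W ∈ Set.range A.transpose.mulVec,
      A.mulVec (fun k => (A.mulVec W k) ^ 3) = 0 ∧ A.mulVec W ≠ 0 := by
  by_contra! hcon
  refine hnp fun C hC => isCompact_preimage_add_cube A (fun U hU hAU => ?_) hC
  rw [← A.range_mulVec_mul_transpose] at hU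
  obtain ⟨Z, rfl⟩ := hU
  rw [← mulVec_mulVec] at hAU ⊢
  exact hcon _ ⟨Z, rfl⟩ hAU
end

section
/- If a polynomial map P ∈ ℂ[X₁,…,Xₙ]ⁿ is injective as a map from ℂⁿ to ℂⁿ, then P is a polynomial automorphism: P is bijective and its inverse map P⁻¹ is also given by a polynomial map. -/
/-!
By Ax–Grothendieck `P` is bijective. Injectivity survives every field extension `K/k`: a
collision over `K`, together with the inverse of one coordinate difference (Rabinowitsch),
is a ring map from a polynomial ring over `k` to `K`, and a common zero of its kernel (weak
Nullstellensatz) is a collision over `k`. Let `F = k(X₁,…,Xₙ)`. Over the algebraic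
closure of `F`, Ax–Grothendieck gives a preimage `η` of the generic point `X`; by uniqueness it
is Galois-invariant, so `η ∈ Fⁿ` (characteristic zero). The substitution `X ↦ P` extends to an
endomorphism `φ` of `F`, and `φ ∘ η` is another preimage of `P = P(X)`, so `φ (ηᵢ) = Xᵢ`.
Writing `ηᵢ = a / b` in lowest terms, this says `a ∘ P = Xᵢ · (b ∘ P)`; since `P` is onto, every
zero of `b` is a zero of `a`, so `a ∈ √(b)` and coprimality makes `b` a unit. Hence `η` is a
polynomial map `Q` with `P ∘ Q = Q ∘ P = id`.
-/

open MvPolynomial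

theorem MvPolynomial.eval_bind₁ {R σ τ : Type*} [CommSemiring R] (x : τ → R)
    (Q : σ → MvPolynomial τ R) (p : MvPolynomial σ R) :
    eval x (bind₁ Q p) = eval (fun i => eval x (Q i)) p :=
  aeval_bind₁ x Q p

section Nullstellensatz

variable {k σ : Type*} [Field k] [IsAlgClosed k] [Finite σ]

theorem exists_ker_le_ker_eval {A : Type*} [Semiring A] [Nontrivial A]
    (Φ : MvPolynomial σ k →+* A) : ∃ x : σ → k, RingHom.ker Φ ≤ RingHom.ker (eval x) := by
  obtain ⟨M, hM, hkerM⟩ := (RingHom.ker Φ).exists_le_maximal (RingHom.ker_ne_top Φ)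
  obtain ⟨x, rfl⟩ := eq_vanishingIdeal_singleton_of_isMaximal k hM
  exact ⟨x, fun p hp => by simpa using (mem_vanishingIdeal_singleton_iff x p).mp (hkerM hp)⟩

theorem mem_radical_span_singleton_of_eval_eq_zero {a b : MvPolynomial σ k}
    (h : ∀ x, eval x b = 0 → eval x a = 0) : a ∈ (Ideal.span {b}).radical := by
  rw [← vanishingIdeal_zeroLocus_eq_radical (K := k)]
  intro x hx
  simpa using h x (by simpa using hx b (Ideal.mem_span_singleton_self b))

theorem injective_aeval_of_injective_eval {ι : Type*} (P : ι → MvPolynomial σ k)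
    (hP : Function.Injective fun x : σ → k => fun i => eval x (P i))
    (K : Type*) [Field K] [Algebra k K] :
    Function.Injective fun v : σ → K => fun i => aeval v (P i) := by
  intro u v huv
  by_contra hne
  obtain ⟨i₀, hi₀⟩ := Function.ne_iff.mp hne
  -- Rabinowitsch: the extra variable `none` inverts `u i₀ - v i₀`.
  let w : Option (σ ⊕ σ) → K := fun o => o.elim (u i₀ - v i₀)⁻¹ (Sum.elim u v)
  let Φ : MvPolynomial (Option (σ ⊕ σ)) k →+* K := aeval (R := k) w
  obtain ⟨x, hx⟩ := exists_ker_le_ker_eval Φ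
  have hx₁₂ : (fun i => x (some (Sum.inl i))) = fun i => x (some (Sum.inr i)) :=
    hP <| funext fun i => by
      have hmem :
          rename (some ∘ Sum.inl) (P i) - rename (some ∘ Sum.inr) (P i) ∈ RingHom.ker Φ := by
        rw [RingHom.mem_ker, RingHom.coe_coe, map_sub, aeval_rename, aeval_rename]
        exact sub_eq_zero.mpr (congrFun huv i)
      have := hx hmem
      rwa [RingHom.mem_ker, map_sub, eval_rename, eval_rename, sub_eq_zero] at this
  have hmem : (X (some (Sum.inl i₀)) - X (some (Sum.inr i₀))) * X none - 1 ∈ RingHom.ker Φ := by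
    simp [Φ, RingHom.mem_ker, w, mul_inv_cancel₀ (sub_ne_zero.mpr hi₀)]
  simpa [RingHom.mem_ker, congrFun hx₁₂ i₀] using hx hmem

end Nullstellensatz

theorem exists_aeval_eq_of_injective_aeval {k σ F K : Type*} [CommRing k] [Finite σ] [Field F]
    [CharZero F] [Field K] [Algebra F K] [IsAlgClosure F K] [Algebra k F] [Algebra k K]
    [IsScalarTower k F K] (P : σ → MvPolynomial σ k)
    (hP : Function.Injective fun v : σ → K => fun i => aeval v (P i)) (y : σ → F) :
    ∃ x : σ → F, ∀ i, aeval x (P i) = y i := by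
  have : IsAlgClosed K := IsAlgClosure.isAlgClosed F
  have hsurj : Function.Surjective fun v : σ → K => fun i => aeval v (P i) := by
    simpa only [eval_map, aeval_def] using
      ax_grothendieck_univ (fun i => map (algebraMap k K) (P i))
        (by simpa only [eval_map, aeval_def] using hP)
  obtain ⟨z, hz⟩ := hsurj (algebraMap F K ∘ y)
  have hfixed (i : σ) : z i ∈ Set.range (algebraMap F K) := by
    refine (InfiniteGalois.mem_range_algebraMap_iff_fixed _).mpr fun ψ => ?_
    have hψz : (fun j => ψ (z j)) = z := hP <| funext fun j => by
      let ψₖ : K →ₐ[k] K := (ψ : K →ₐ[F] K).restrictScalars k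
      calc aeval (fun j => ψₖ (z j)) (P j) = ψₖ (aeval z (P j)) := (comp_aeval_apply z ψₖ _).symm
        _ = aeval z (P j) := by simp [ψₖ, congrFun hz j]
    exact congrFun hψz i
  choose x hx using hfixed
  refine ⟨x, fun i => (algebraMap F K).injective ?_⟩
  rw [← IsScalarTower.coe_toAlgHom' k, comp_aeval_apply]
  simp only [IsScalarTower.coe_toAlgHom', hx]
  exact congrFun hz i

section Substitution

variable {k σ τ : Type*} [Field k] {P : σ → MvPolynomial τ k}

theorem injective_bind₁_of_surjective [Infinite k]
    (hP : Function.Surjective fun x : τ → k => fun i => eval x (P i)) :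
    Function.Injective (bind₁ P) := by
  refine (injective_iff_map_eq_zero (bind₁ P)).mpr fun p hp => MvPolynomial.funext fun x => ?_
  obtain ⟨y, rfl⟩ := hP x
  simpa [eval_bind₁] using congrArg (eval y) hp

theorem isUnit_of_bind₁_eq_mul [IsAlgClosed k] [Finite σ]
    (hP : Function.Surjective fun x : τ → k => fun i => eval x (P i)) {a b : MvPolynomial σ k}
    (q : MvPolynomial τ k) (hab : IsRelPrime a b) (h : bind₁ P a = q * bind₁ P b) :
    IsUnit b := by
  obtain ⟨m, hm⟩ := mem_radical_span_singleton_of_eval_eq_zero (a := a) (b := b) fun x hbx => by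
    obtain ⟨y, rfl⟩ := hP x
    simpa [eval_bind₁, hbx] using congrArg (eval y) h
  exact hab.pow_left (Ideal.mem_span_singleton.mp hm) dvd_rfl

end Substitution

theorem exists_algebraMap_eq_of_map_eq {k σ : Type*} [Field k] [IsAlgClosed k] [Finite σ]
    {P : σ → MvPolynomial σ k} (hP : Function.Surjective fun x : σ → k => fun i => eval x (P i))
    (φ : FractionRing (MvPolynomial σ k) →+* FractionRing (MvPolynomial σ k))
    (hφ : ∀ p, φ (algebraMap _ _ p) = algebraMap _ _ (bind₁ P p))
    {z : FractionRing (MvPolynomial σ k)} {q : MvPolynomial σ k}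
    (hz : φ z = algebraMap _ _ q) : ∃ Q, algebraMap (MvPolynomial σ k) _ Q = z := by
  set a := IsFractionRing.num (MvPolynomial σ k) z
  set b := (IsFractionRing.den (MvPolynomial σ k) z : MvPolynomial σ k)
  have hb : φ (algebraMap _ _ b) ≠ 0 :=
    (map_ne_zero φ).mpr (IsFractionRing.to_map_ne_zero_of_mem_nonZeroDivisors (by simp [b]))
  have hab : bind₁ P a = q * bind₁ P b := by
    apply IsFractionRing.injective (MvPolynomial σ k) (FractionRing (MvPolynomial σ k))
    rw [← IsFractionRing.mk'_num_den' (MvPolynomial σ k) z, map_div₀, div_eq_iff hb] at hz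
    simpa [hφ] using hz
  exact IsFractionRing.isInteger_of_isUnit_den
    (isUnit_of_bind₁_eq_mul hP q (IsFractionRing.num_den_reduced _ z) hab)

theorem exists_bind₁_inverse_of_injective {k σ : Type*} [Field k] [IsAlgClosed k] [CharZero k]
    [Finite σ] (P : σ → MvPolynomial σ k)
    (hP : Function.Injective fun x : σ → k => fun i => eval x (P i)) :
    ∃ Q : σ → MvPolynomial σ k, (∀ i, bind₁ P (Q i) = X i) ∧ ∀ i, bind₁ Q (P i) = X i := by
  let R := MvPolynomial σ k
  let F := FractionRing R
  let ι : R →ₐ[k] F := IsScalarTower.toAlgHom k R F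
  have hsurj := ax_grothendieck_univ P hP
  obtain ⟨η, hη⟩ := exists_aeval_eq_of_injective_aeval (K := AlgebraicClosure F) P
    (injective_aeval_of_injective_eval P hP _) fun i => ι (X i)
  have hg : Function.Injective (ι.comp (bind₁ P)) :=
    (IsFractionRing.injective R F).comp (injective_bind₁_of_surjective hsurj)
  let φ : F →ₐ[k] F := IsFractionRing.liftAlgHom hg
  have hφ (p : R) : φ (ι p) = ι (bind₁ P p) := IsFractionRing.lift_algebraMap hg p
  -- Both `φ ∘ η` and `X` are preimages of `P` under `P`, viewed over `F`.
  have hφη : (fun i => φ (η i)) = fun i => ι (X i) := by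
    refine injective_aeval_of_injective_eval P hP F (funext fun i => ?_)
    beta_reduce
    rw [← comp_aeval_apply, ← comp_aeval_apply, hη, aeval_X_left_apply, hφ, bind₁_X_right]
  choose Q hQ using fun i => exists_algebraMap_eq_of_map_eq hsurj φ hφ (congrFun hφη i)
  refine ⟨Q, fun i => IsFractionRing.injective R F ?_, fun i => IsFractionRing.injective R F ?_⟩
  · change ι (bind₁ P (Q i)) = ι (X i)
    rw [← hφ]
    exact (congrArg φ (hQ i)).trans (congrFun hφη i)
  · change ι (aeval Q (P i)) = ι (X i)
    rw [comp_aeval_apply, show (fun j => ι (Q j)) = η from funext hQ, hη]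

/-- An injective polynomial map `P ∈ ℂ[X₁,…,Xₙ]ⁿ` is a polynomial automorphism:
it is bijective and its inverse is also a polynomial map. -/
theorem injective_polynomial_map_is_automorphism (n : ℕ)
    (P : Fin n → MvPolynomial (Fin n) ℂ)
    (hinj : Function.Injective (fun x : Fin n → ℂ => fun i => MvPolynomial.eval x (P i))) :
    Function.Bijective (fun x : Fin n → ℂ => fun i => MvPolynomial.eval x (P i)) ∧
    ∃ Q : Fin n → MvPolynomial (Fin n) ℂ,
      (∀ x : Fin n → ℂ,
        (fun i => MvPolynomial.eval (fun j => MvPolynomial.eval x (P j)) (Q i)) = x) ∧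
      (∀ x : Fin n → ℂ,
        (fun i => MvPolynomial.eval (fun j => MvPolynomial.eval x (Q j)) (P i)) = x) := by
  obtain ⟨Q, hPQ, hQP⟩ := exists_bind₁_inverse_of_injective P hinj
  refine ⟨⟨hinj, ax_grothendieck_univ P hinj⟩, Q, fun x => funext fun i => ?_,
    fun x => funext fun i => ?_⟩
  · simpa [eval_bind₁] using congrArg (eval x) (hPQ i)
  · simpa [eval_bind₁] using congrArg (eval x) (hQP i)
end

section
/- An analytic map H : ℝⁿ → ℝⁿ is a diffeomorphism (bijective with differentiable inverse) if and only if det J_H(X) ≠ 0 for all X ∈ ℝⁿ and H is proper. -/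
/-!
By the inverse function theorem, a map with everywhere invertible derivative is a local
homeomorphism. A proper local homeomorphism is a covering map, its fibres being compact and
discrete, hence finite. The identity of the simply connected space `ℝⁿ` lifts through such a
covering to a continuous section `g`, and `g ∘ H = id` because both sides lift `H` and agree
at one point of the connected space `ℝⁿ`; so `H` is a homeomorphism, and its inverse is
differentiable by the inverse function theorem again. Conversely, the chain rule for
`H⁻¹ ∘ H = id` makes the Jacobian invertible, and preimages under `H` are images under the
continuous `H⁻¹`.
-/

open Function

theorem ContinuousLinearMap.det_of_apply_single {ι R : Type*} [Fintype ι] [DecidableEq ι]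
    [CommRing R] [TopologicalSpace R] (L : (ι → R) →L[R] (ι → R)) :
    (Matrix.of fun j k => L (Pi.single k 1) j).det = L.det := by
  rw [ContinuousLinearMap.det, ← LinearMap.det_toMatrix']
  rfl

section Calculus

variable {𝕜 E F : Type*} [NontriviallyNormedField 𝕜] [NormedAddCommGroup E] [NormedSpace 𝕜 E]
  [NormedAddCommGroup F] [NormedSpace 𝕜 F]

theorem det_fderiv_ne_zero_of_leftInverse [FiniteDimensional 𝕜 E] {f g : E → E}
    (hgf : LeftInverse g f) {x : E} (hf : DifferentiableAt 𝕜 f x)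
    (hg : DifferentiableAt 𝕜 g (f x)) : (fderiv 𝕜 f x).det ≠ 0 := by
  have hcomp : (fderiv 𝕜 g (f x)).comp (fderiv 𝕜 f x) = ContinuousLinearMap.id 𝕜 E := by
    rw [← fderiv_comp x hg hf, hgf.comp_eq_id, fderiv_id]
  have hdet : (fderiv 𝕜 g (f x)).det * (fderiv 𝕜 f x).det = 1 := by
    rw [ContinuousLinearMap.det, ContinuousLinearMap.det, ← LinearMap.det_comp,
      ← ContinuousLinearMap.toLinearMap_comp, hcomp]
    exact LinearMap.det_id
  exact right_ne_zero_of_mul_eq_one hdet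

theorem isLocalHomeomorph_of_hasStrictFDerivAt [CompleteSpace E] {f : E → F}
    {f' : E → E ≃L[𝕜] F} (hf : ∀ x, HasStrictFDerivAt f (f' x : E →L[𝕜] F) x) :
    IsLocalHomeomorph f :=
  IsLocalHomeomorph.mk f fun x =>
    ⟨(hf x).toOpenPartialHomeomorph f, (hf x).mem_toOpenPartialHomeomorph_source,
      fun y _ => by rw [(hf x).toOpenPartialHomeomorph_coe]⟩

theorem Homeomorph.differentiable_symm_of_hasFDerivAt (h : E ≃ₜ F) {f' : E → E ≃L[𝕜] F}
    (hf : ∀ x, HasFDerivAt h (f' x : E →L[𝕜] F) x) : Differentiable 𝕜 h.symm := fun y =>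
  (HasFDerivAt.of_local_left_inverse h.symm.continuous.continuousAt
    (by simpa using hf (h.symm y)) (.of_forall h.apply_symm_apply)).differentiableAt

end Calculus

section Covering

variable {E X : Type*} [TopologicalSpace E] [TopologicalSpace X] {p : E → X}

theorem IsProperMap.isCoveringMap [T2Space E] (hp : IsProperMap p) (hl : IsLocalHomeomorph p) :
    IsCoveringMap p := by
  have hfiber : ∀ x : X, IsDiscrete (p ⁻¹' {x}) := fun x =>
    IsDiscrete.of_openPartialHomeomorph p subset_rfl fun e _ => by
      obtain ⟨φ, hφ, rfl⟩ := hl e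
      exact ⟨φ, hφ, rfl⟩
  rw [isCoveringMap_iff_isCoveringMapOn_univ]
  exact hp.isClosedMap.isCoveringMapOn_of_isLocalHomeomorphOn
    (fun x _ => (hp.isCompact_preimage isCompact_singleton).finite (hfiber x))
    hl.isLocalHomeomorphOn

theorem IsCoveringMap.exists_homeomorph [PreconnectedSpace E] [Nonempty E]
    [SimplyConnectedSpace X] [LocallyPathConnectedSpace X] (hp : IsCoveringMap p) :
    ∃ h : E ≃ₜ X, ⇑h = p := by
  obtain e₀ : E := Classical.arbitrary E
  obtain ⟨g, ⟨hg₀, hpg⟩, -⟩ :=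
    hp.existsUnique_continuousMap_lifts (ContinuousMap.id X) (p e₀) e₀ rfl
  have hgp : g ∘ p = id :=
    hp.eq_of_comp_eq (g.continuous.comp hp.continuous) continuous_id
      (by rw [← Function.comp_assoc, hpg]; rfl) e₀ hg₀
  exact ⟨⟨⟨p, g, congrFun hgp, congrFun hpg⟩, hp.continuous, g.continuous⟩, rfl⟩

end Covering

theorem IsProperMap.exists_homeomorph_of_hasStrictFDerivAt {E F : Type*}
    [NormedAddCommGroup E] [NormedSpace ℝ E] [CompleteSpace E]
    [NormedAddCommGroup F] [NormedSpace ℝ F] {f : E → F} (hp : IsProperMap f)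
    {f' : E → E ≃L[ℝ] F} (hf : ∀ x, HasStrictFDerivAt f (f' x : E →L[ℝ] F) x) :
    ∃ h : E ≃ₜ F, ⇑h = f :=
  (hp.isCoveringMap (isLocalHomeomorph_of_hasStrictFDerivAt hf)).exists_homeomorph

/-- **Hadamard's Diffeomorphism Theorem.** An analytic map `H : ℝⁿ → ℝⁿ` is a diffeomorphism
(bijective with differentiable inverse) iff its Jacobian determinant is nonzero everywhere
and `H` is proper (preimages of compact sets are compact). -/
theorem hadamard_diffeomorphism (n : ℕ) (H : (Fin n → ℝ) → (Fin n → ℝ))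
    (hH : ∀ x, AnalyticAt ℝ H x) :
    (Function.Bijective H ∧ Differentiable ℝ (Function.invFun H)) ↔
    ((∀ X : Fin n → ℝ,
        (Matrix.of fun j k => fderiv ℝ H X (Pi.single k 1) j).det ≠ 0) ∧
      ∀ C : Set (Fin n → ℝ), IsCompact C → IsCompact (H ⁻¹' C)) := by
  simp only [ContinuousLinearMap.det_of_apply_single]
  constructor
  · rintro ⟨hbij, hdiff⟩
    refine ⟨fun X => det_fderiv_ne_zero_of_leftInverse (leftInverse_invFun hbij.1)
      (hH X).differentiableAt (hdiff _), fun C hC => ?_⟩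
    rw [← Set.image_eq_preimage_of_inverse (rightInverse_invFun hbij.2)
      (leftInverse_invFun hbij.1)]
    exact hC.image hdiff.continuous
  · rintro ⟨hdet, hprop⟩
    have hstrict X : HasStrictFDerivAt H
        ((fderiv ℝ H X).toContinuousLinearEquivOfDetNeZero (hdet X) : _ →L[ℝ] _) X := by
      simpa using (hH X).hasStrictFDerivAt
    have hproper : IsProperMap H := isProperMap_iff_isCompact_preimage.2
      ⟨continuous_iff_continuousAt.2 fun X => (hH X).continuousAt, hprop⟩
    obtain ⟨h, rfl⟩ := hproper.exists_homeomorph_of_hasStrictFDerivAt hstrict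
    rw [invFun_eq_of_injective_of_rightInverse h.injective h.apply_symm_apply]
    exact ⟨h.bijective, h.differentiable_symm_of_hasFDerivAt fun X => (hstrict X).hasFDerivAt⟩
end
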